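/- If the question profile X satisfies joint alignment with u, i.e. X(a) = Γ(a)(λ·u(a) + d) + κ(a)·𝟏 with each Γ(a) invertible, then X is incentivizable: there exists a payoff function V : ℝ^m × A × Θ → ℝ such that for every belief p, the maximizers of 𝔼_p[V(r,a,θ)] over (r,a) are exactly the pairs (𝔼_p[X(a,·)], a) with a maximizing 𝔼_p[u(a,·)]. -/
import Mathlib


/-- If the question profile `X` is jointly aligned with `u`, i.e.
`X(a) = Γ(a)(λ u(a) + d) + κ(a) 𝟏` with each `Γ(a)` invertible, then `X` is
incentivizable: there is a payoff `V` such that for every belief `p`, the maximizers of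
`𝔼_p[V(r,a,θ)]` over `(r,a)` are exactly the pairs `(𝔼_p[X(a,·)], a)` with `a`
maximizing `𝔼_p[u(a,·)]`. -/
theorem stmt4 (Θ A : Type) [Fintype Θ] [Fintype A] (m : ℕ)
    (X : A → Matrix (Fin m) Θ ℝ) (u : A → Θ → ℝ)
    (lam : Fin m → ℝ) (d : Matrix (Fin m) Θ ℝ)
    (Γ : A → Matrix (Fin m) (Fin m) ℝ) (κ : A → Fin m → ℝ)
    (hΓ : ∀ a, IsUnit (Γ a))
    (halign : ∀ a, X a =
      Γ a * (Matrix.of (fun i θ => lam i * u a θ) + d) + Matrix.of (fun i _ => κ a i)) :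
    ∃ V : (Fin m → ℝ) → A → Θ → ℝ,
      ∀ p : Θ → ℝ, (∀ θ, 0 ≤ p θ) → (∑ θ, p θ = 1) →
        {ra : (Fin m → ℝ) × A |
            ∀ (r' : Fin m → ℝ) (a' : A),
              (∑ θ, p θ * V r' a' θ) ≤ ∑ θ, p θ * V ra.1 ra.2 θ} =
        {ra : (Fin m → ℝ) × A |
            (∀ j, ra.1 j = ∑ θ, p θ * X ra.2 j θ) ∧
            ∀ b : A, (∑ θ, p θ * u b θ) ≤ ∑ θ, p θ * u ra.2 θ} := by
  classical
  set U : ℝ := ∑ a : A, ∑ θ : Θ, |u a θ| with hU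
  set D : ℝ := ∑ j : Fin m, ∑ θ : Θ, |d j θ| with hD
  set K : ℝ := 1 + (∑ j, lam j ^ 2) * (2 * U) + 2 * (∑ j, |lam j|) * D with hK
  set t : (Fin m → ℝ) → A → Fin m → ℝ :=
    fun r a => Matrix.mulVec (Γ a)⁻¹ (fun i => r i - κ a i) with ht
  set V : (Fin m → ℝ) → A → Θ → ℝ :=
    fun r a θ => K * u a θ +
      ∑ j, (2 * t r a j * (lam j * u a θ + d j θ) - t r a j ^ 2) with hV
  refine ⟨V, ?_⟩
  intro p hp hp1
  have hple1 : ∀ θ, p θ ≤ 1 := by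
    intro θ
    rw [← hp1]
    exact Finset.single_le_sum (fun i _ => hp i) (Finset.mem_univ θ)
  set μ : A → ℝ := fun a => ∑ θ, p θ * u a θ with hμ
  set dbar : Fin m → ℝ := fun j => ∑ θ, p θ * d j θ with hdbar
  set mbar : A → Fin m → ℝ := fun a j => lam j * μ a + dbar j with hmbar
  set G : A → ℝ := fun a => K * μ a + ∑ j, (mbar a j) ^ 2 with hG
  set rstar : A → Fin m → ℝ := fun a j => Matrix.mulVec (Γ a) (mbar a) j + κ a j with hrstar
  have hdet : ∀ a, IsUnit (Γ a).det := fun a => (Matrix.isUnit_iff_isUnit_det _).mp (hΓ a)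
  -- expected payoff formula
  have hEV : ∀ r a, (∑ θ, p θ * V r a θ)
      = K * μ a + ∑ j, (2 * t r a j * mbar a j - t r a j ^ 2) := by
    intro r a
    have h1 : ∀ θ, p θ * V r a θ = K * (p θ * u a θ) +
        ∑ j, (2 * t r a j * lam j * (p θ * u a θ) + 2 * t r a j * (p θ * d j θ)
              - t r a j ^ 2 * p θ) := by
      intro θ
      simp only [hV]
      rw [mul_add, Finset.mul_sum]
      congr 1
      · ring
      · exact Finset.sum_congr rfl fun j _ => by ring
    rw [Finset.sum_congr rfl fun θ _ => h1 θ, Finset.sum_add_distrib, ← Finset.mul_sum,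
      Finset.sum_comm]
    congr 1
    refine Finset.sum_congr rfl fun j _ => ?_
    rw [Finset.sum_sub_distrib, Finset.sum_add_distrib, ← Finset.mul_sum, ← Finset.mul_sum,
      ← Finset.mul_sum, hp1]
    simp only [hmbar, hμ, hdbar]
    ring
  -- expected report formula
  have hEX : ∀ a j, (∑ θ, p θ * X a j θ) = Matrix.mulVec (Γ a) (mbar a) j + κ a j := by
    intro a j
    have hXe : ∀ θ, X a j θ = (∑ k, Γ a j k * (lam k * u a θ + d k θ)) + κ a j := by
      intro θ
      rw [halign a]
      simp [Matrix.mul_apply, Matrix.add_apply]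
    have h1 : ∀ θ, p θ * X a j θ =
        (∑ k, (Γ a j k * lam k * (p θ * u a θ) + Γ a j k * (p θ * d k θ))) + κ a j * p θ := by
      intro θ
      rw [hXe θ, mul_add, Finset.mul_sum]
      congr 1
      · exact Finset.sum_congr rfl fun k _ => by ring
      · ring
    rw [Finset.sum_congr rfl fun θ _ => h1 θ, Finset.sum_add_distrib, ← Finset.mul_sum, hp1,
      mul_one, Finset.sum_comm]
    congr 1
    have : ∀ k ∈ Finset.univ, (∑ θ, (Γ a j k * lam k * (p θ * u a θ) + Γ a j k * (p θ * d k θ)))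
        = Γ a j k * mbar a k := by
      intro k _
      rw [Finset.sum_add_distrib, ← Finset.mul_sum, ← Finset.mul_sum]
      simp only [hmbar, hμ, hdbar]
      ring
    rw [Finset.sum_congr rfl this]
    simp [Matrix.mulVec, dotProduct]
  -- inversion facts
  have htinv : ∀ a (w : Fin m → ℝ), t (fun j => Matrix.mulVec (Γ a) w j + κ a j) a = w := by
    intro a w
    simp only [ht]
    have h2 : (fun i => (Matrix.mulVec (Γ a) w i + κ a i) - κ a i) = Matrix.mulVec (Γ a) w := by
      funext i; ring
    rw [h2, Matrix.mulVec_mulVec, Matrix.nonsing_inv_mul _ (hdet a), Matrix.one_mulVec]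
  have htsurj : ∀ a r, Matrix.mulVec (Γ a) (t r a) = fun i => r i - κ a i := by
    intro a r
    simp only [ht]
    rw [Matrix.mulVec_mulVec, Matrix.mul_nonsing_inv _ (hdet a), Matrix.one_mulVec]
  -- value bound and attainment
  have hEVle : ∀ r a, (∑ θ, p θ * V r a θ) ≤ G a := by
    intro r a
    rw [hEV]
    have : ∑ j, (2 * t r a j * mbar a j - t r a j ^ 2) ≤ ∑ j, (mbar a j) ^ 2 :=
      Finset.sum_le_sum fun j _ => by nlinarith [sq_nonneg (t r a j - mbar a j)]
    simp only [hG]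
    linarith
  have hEVrstar : ∀ a, (∑ θ, p θ * V (rstar a) a θ) = G a := by
    intro a
    rw [hEV]
    have h2 : t (rstar a) a = mbar a := htinv a (mbar a)
    rw [h2]
    simp only [hG]
    congr 1
    exact Finset.sum_congr rfl fun j _ => by ring
  have hEVstrict : ∀ r a, (∑ θ, p θ * V r a θ) = G a → ∀ j, r j = rstar a j := by
    intro r a hra
    have h1 : ∑ j, (t r a j - mbar a j) ^ 2 = 0 := by
      rw [hEV] at hra
      simp only [hG] at hra
      have h2 : ∑ j, (t r a j - mbar a j) ^ 2
          = ∑ j, ((mbar a j) ^ 2 - (2 * t r a j * mbar a j - t r a j ^ 2)) :=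
        Finset.sum_congr rfl fun j _ => by ring
      rw [h2, Finset.sum_sub_distrib]
      linarith
    have h3 : ∀ j ∈ Finset.univ, (t r a j - mbar a j) ^ 2 = 0 :=
      (Finset.sum_eq_zero_iff_of_nonneg fun j _ => sq_nonneg _).mp h1
    have h4 : t r a = mbar a := by
      funext j
      have := h3 j (Finset.mem_univ j)
      have := pow_eq_zero_iff (n := 2) (by norm_num) |>.mp this
      linarith
    intro j
    have h5 := congrFun (htsurj a r) j
    rw [h4] at h5
    simp only [hrstar]
    linarith [h5.symm]
  -- bounds for monotonicity
  have hμU : ∀ a, |μ a| ≤ U := by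
    intro a
    simp only [hμ]
    calc |∑ θ, p θ * u a θ| ≤ ∑ θ, |p θ * u a θ| := Finset.abs_sum_le_sum_abs _ _
      _ ≤ ∑ θ, |u a θ| := Finset.sum_le_sum fun θ _ => by
          rw [abs_mul, abs_of_nonneg (hp θ)]
          exact mul_le_of_le_one_left (abs_nonneg _) (hple1 θ)
      _ ≤ U := by
          rw [hU]
          exact Finset.single_le_sum (f := fun a => ∑ θ, |u a θ|)
            (fun i _ => Finset.sum_nonneg fun θ _ => abs_nonneg _) (Finset.mem_univ a)
  have hdD : ∀ j, |dbar j| ≤ D := by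
    intro j
    simp only [hdbar]
    calc |∑ θ, p θ * d j θ| ≤ ∑ θ, |p θ * d j θ| := Finset.abs_sum_le_sum_abs _ _
      _ ≤ ∑ θ, |d j θ| := Finset.sum_le_sum fun θ _ => by
          rw [abs_mul, abs_of_nonneg (hp θ)]
          exact mul_le_of_le_one_left (abs_nonneg _) (hple1 θ)
      _ ≤ D := by
          rw [hD]
          exact Finset.single_le_sum (f := fun j => ∑ θ, |d j θ|)
            (fun i _ => Finset.sum_nonneg fun θ _ => abs_nonneg _) (Finset.mem_univ j)
  have hT : |∑ j, lam j * dbar j| ≤ (∑ j, |lam j|) * D := by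
    calc |∑ j, lam j * dbar j| ≤ ∑ j, |lam j * dbar j| := Finset.abs_sum_le_sum_abs _ _
      _ ≤ ∑ j, |lam j| * D := Finset.sum_le_sum fun j _ => by
          rw [abs_mul]
          exact mul_le_mul_of_nonneg_left (hdD j) (abs_nonneg _)
      _ = (∑ j, |lam j|) * D := (Finset.sum_mul _ _ _).symm
  have hGdiff : ∀ a b, G b - G a = (μ b - μ a) *
      (K + (∑ j, lam j ^ 2) * (μ a + μ b) + 2 * ∑ j, lam j * dbar j) := by
    intro a b
    have haux : ∀ x y : ℝ, (∑ j, (lam j * y + dbar j) ^ 2) - (∑ j, (lam j * x + dbar j) ^ 2)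
        = (y - x) * ((∑ j, lam j ^ 2) * (x + y) + 2 * ∑ j, lam j * dbar j) := by
      intro x y
      have h1 : (∑ j, lam j ^ 2) * (x + y) + 2 * ∑ j, lam j * dbar j
          = ∑ j, (lam j ^ 2 * (x + y) + 2 * (lam j * dbar j)) := by
        rw [Finset.sum_add_distrib, Finset.sum_mul, Finset.mul_sum]
      rw [h1, Finset.mul_sum, ← Finset.sum_sub_distrib]
      exact Finset.sum_congr rfl fun j _ => by ring
    simp only [hG, hmbar]
    have := haux (μ a) (μ b)
    nlinarith [this]
  have hc : ∀ a b, 0 < K + (∑ j, lam j ^ 2) * (μ a + μ b) + 2 * ∑ j, lam j * dbar j := by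
    intro a b
    have hS : (0:ℝ) ≤ ∑ j, lam j ^ 2 := Finset.sum_nonneg fun j _ => sq_nonneg _
    have ha1 := abs_le.mp (hμU a)
    have ha2 := abs_le.mp (hμU b)
    have hTT := abs_le.mp hT
    have h1 : (∑ j, lam j ^ 2) * (-(2 * U)) ≤ (∑ j, lam j ^ 2) * (μ a + μ b) := by
      apply mul_le_mul_of_nonneg_left _ hS
      linarith [ha1.1, ha2.1]
    rw [hK]
    nlinarith [h1, hTT.1]
  have hGmono : ∀ a b, G a ≤ G b ↔ μ a ≤ μ b := by
    intro a b
    have hd := hGdiff a b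
    have hcb := hc a b
    constructor <;> intro h <;> nlinarith
  -- assemble
  ext ⟨r, a⟩
  simp only [Set.mem_setOf_eq]
  constructor
  · intro h
    have hGle : ∀ b, G b ≤ G a := by
      intro b
      have h1 := h (rstar b) b
      rw [hEVrstar b] at h1
      exact le_trans h1 (hEVle r a)
    have hμle : ∀ b, μ b ≤ μ a := fun b => (hGmono b a).mp (hGle b)
    have hEVra : (∑ θ, p θ * V r a θ) = G a := by
      refine le_antisymm (hEVle r a) ?_
      have h1 := h (rstar a) a
      rw [hEVrstar a] at h1
      exact h1
    have hr := hEVstrict r a hEVra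
    refine ⟨fun j => ?_, fun b => hμle b⟩
    rw [hEX a j, hr j]
  · rintro ⟨hr, hμle⟩
    intro r' a'
    have h1 : (∑ θ, p θ * V r' a' θ) ≤ G a' := hEVle r' a'
    have h2 : G a' ≤ G a := (hGmono a' a).mpr (hμle a')
    have h3 : r = rstar a := by
      funext j
      rw [hr j, hEX a j]
    rw [h3, hEVrstar a]
    linarith
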